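/- arXiv:2211.14778 — 3 statements merged into one kernel-verified Lean document; each statement's English description precedes it below -/
import Mathlib

section
/- Let G be a finite group with power graph P(G), and let C be a class of the closed twin relation of P(G). Then all elements of C have the same order if and only if C is a single ⋄-class (i.e., all elements of C generate the same cyclic subgroup). -/
/-- Closed neighbourhood of a vertex. -/
def closedNbhd {V : Type*} (Γ : SimpleGraph V) (x : V) : Set V := {y | Γ.Adj x y} ∪ {x}

/-- Closed neighbourhood of a set of vertices (intersection convention; N[∅] = univ). -/
def closedNbhdSet {V : Type*} (Γ : SimpleGraph V) (X : Set V) : Set V :=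
  ⋂ x ∈ X, closedNbhd Γ x

/-- Neighbourhood closure X̂ = N[N[X]]. -/
def nbhdClosure {V : Type*} (Γ : SimpleGraph V) (X : Set V) : Set V :=
  closedNbhdSet Γ (closedNbhdSet Γ X)

/-- Closed twin class of a vertex. -/
def twinClass {V : Type*} (Γ : SimpleGraph V) (y : V) : Set V :=
  {x | closedNbhd Γ x = closedNbhd Γ y}

/-- The power graph of a group. -/
def powerGraph (G : Type*) [Group G] : SimpleGraph G where
  Adj x y := x ≠ y ∧ ((∃ m : ℕ, 0 < m ∧ y = x ^ m) ∨ (∃ m : ℕ, 0 < m ∧ x = y ^ m))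
  symm := ⟨by rintro x y ⟨h, h2⟩; exact ⟨h.symm, h2.symm⟩⟩
  loopless := ⟨by rintro x ⟨h, _⟩; exact h rfl⟩

/-- The ⋄-class of an element: elements generating the same cyclic subgroup. -/
def diamondClass {G : Type*} [Group G] (y : G) : Set G :=
  {x | Subgroup.zpowers x = Subgroup.zpowers y}

/-
In a finite group, `x` and `z` are adjacent or equal in the power graph exactly when the cyclic
subgroups `⟨x⟩` and `⟨z⟩` are comparable, so the closed neighbourhood `N[x]` depends only on `⟨x⟩`:
every ⋄-class lies in a closed twin class. Conversely, twins are in particular adjacent, so their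
cyclic subgroups are comparable, and comparable cyclic subgroups of equal order coincide.
-/

open Subgroup

section

variable {G : Type*} [Group G]

lemma IsOfFinOrder.exists_pos_pow_eq_iff_mem_zpowers {a b : G} (ha : IsOfFinOrder a) :
    (∃ m : ℕ, 0 < m ∧ b = a ^ m) ↔ b ∈ zpowers a := by
  refine ⟨fun ⟨m, _, hm⟩ => hm ▸ pow_mem (mem_zpowers a) m, fun hb => ?_⟩
  obtain ⟨n, rfl⟩ := ha.mem_powers_iff_mem_zpowers.2 hb
  exact ⟨n + orderOf a, by have := ha.orderOf_pos; omega,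
    by rw [pow_add, pow_orderOf_eq_one, mul_one]⟩

lemma zpowers_eq_of_le_of_orderOf_eq [Finite G] {x y : G}
    (hle : zpowers x ≤ zpowers y) (hord : orderOf x = orderOf y) : zpowers x = zpowers y :=
  eq_of_le_of_card_ge hle (by rw [Nat.card_zpowers, Nat.card_zpowers, hord])

lemma orderOf_eq_of_mem_diamondClass {x y : G} (hx : x ∈ diamondClass y) :
    orderOf x = orderOf y := by
  rw [← Nat.card_zpowers, ← Nat.card_zpowers, show zpowers x = zpowers y from hx]

lemma closedNbhd_powerGraph [Finite G] (x : G) :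
    closedNbhd (powerGraph G) x = {z | zpowers z ≤ zpowers x ∨ zpowers x ≤ zpowers z} := by
  ext z
  simp only [closedNbhd, powerGraph, Set.mem_union, Set.mem_ofPred_eq, Set.mem_singleton_iff,
    (isOfFinOrder_of_finite x).exists_pos_pow_eq_iff_mem_zpowers,
    (isOfFinOrder_of_finite z).exists_pos_pow_eq_iff_mem_zpowers, zpowers_le]
  constructor
  · rintro (⟨-, h⟩ | rfl)
    · exact h
    · exact Or.inl (mem_zpowers z)
  · intro h
    by_cases hxz : x = z
    · exact Or.inr hxz.symm
    · exact Or.inl ⟨hxz, h⟩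

lemma diamondClass_subset_twinClass [Finite G] (y : G) :
    diamondClass y ⊆ twinClass (powerGraph G) y := fun x (hx : zpowers x = zpowers y) => by
  simp only [twinClass, Set.mem_ofPred_eq, closedNbhd_powerGraph, hx]

lemma le_or_le_of_mem_twinClass [Finite G] {x y : G} (hx : x ∈ twinClass (powerGraph G) y) :
    zpowers x ≤ zpowers y ∨ zpowers y ≤ zpowers x := by
  have hxy : x ∈ closedNbhd (powerGraph G) y := hx ▸ Or.inr rfl
  rw [closedNbhd_powerGraph] at hxy
  exact hxy

end

theorem stmt9 {G : Type*} [Group G] [Fintype G] (y : G) (C : Set G)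
    (hC : C = twinClass (powerGraph G) y) :
    (∀ a ∈ C, ∀ b ∈ C, orderOf a = orderOf b) ↔ C = diamondClass y := by
  subst hC
  constructor
  · intro hord
    refine (diamondClass_subset_twinClass y).antisymm' fun x hx => ?_
    have hxy := hord x hx y rfl
    show zpowers x = zpowers y
    rcases le_or_le_of_mem_twinClass hx with hle | hle
    · exact zpowers_eq_of_le_of_orderOf_eq hle hxy
    · exact (zpowers_eq_of_le_of_orderOf_eq hle hxy.symm).symm
  · rintro h a ha b hb
    rw [h] at ha hb
    exact (orderOf_eq_of_mem_diamondClass ha).trans (orderOf_eq_of_mem_diamondClass hb).symm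
end

section
/- Let G be a finite group and C ≠ S a closed twin class of P(G) of compound type. Then C is critical (i.e., Ĉ = C ∪̇ {1} and |Ĉ| = p^r for some prime p and r ≥ 2) if and only if the parameters of C are (p, r, 0). -/
/-- A critical class: Ĉ = C ∪̇ {1} and |Ĉ| = p^r for a prime p and r ≥ 2. -/
def IsCritical {G : Type*} [Group G] (P : SimpleGraph G) (C : Set G) : Prop :=
  nbhdClosure P C = C ∪ {1} ∧ (1 : G) ∉ C ∧
    ∃ p r : ℕ, p.Prime ∧ 2 ≤ r ∧ (nbhdClosure P C).ncard = p ^ r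

/-!
Because `C` is the twin class of `y`, its closure is `Ĉ = N[N[y]]`. Any two elements of the cyclic
`p`-group `⟨y⟩` are joined in the power graph, so `⟨y⟩ ⊆ Ĉ`. If `C` is critical, the element of
order `p` of `⟨y⟩` therefore lies in `C`, which forces `p ^ (s + 1) ≤ p`, i.e. `s = 0`.
Conversely, for `s = 0` we have `C ∪ {1} = ⟨y⟩`, and an element `z ∈ Ĉ \ ⟨y⟩` would satisfy
`y ∈ ⟨z⟩`; as the element of order `p` is a twin of `y`, `o(z)` must be a power of `p`, and then
`z` is itself a twin of `y`, so `z ∈ C ⊆ ⟨y⟩`. Hence `Ĉ = ⟨y⟩` has `p ^ r` elements.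
-/

section Graph

variable {V : Type*} (Γ : SimpleGraph V)

lemma mem_closedNbhd_comm {u w : V} : u ∈ closedNbhd Γ w ↔ w ∈ closedNbhd Γ u := by
  simp only [closedNbhd, Set.mem_union, Set.mem_ofPred_eq, Set.mem_singleton_iff, Γ.adj_comm,
    eq_comm]

lemma closedNbhdSet_twinClass (y : V) : closedNbhdSet Γ (twinClass Γ y) = closedNbhd Γ y := by
  ext z
  simp only [closedNbhdSet, twinClass, Set.mem_iInter₂, Set.mem_ofPred_eq]
  exact ⟨fun h => h y rfl, fun h x hx => hx ▸ h⟩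

lemma closedNbhd_subset_of_mem_closedNbhdSet_closedNbhd {y z : V}
    (hz : z ∈ closedNbhdSet Γ (closedNbhd Γ y)) : closedNbhd Γ y ⊆ closedNbhd Γ z :=
  fun w hw => (mem_closedNbhd_comm Γ).1 (Set.mem_iInter₂.1 hz w hw)

end Graph

open Subgroup

section PowerGraph

variable {G : Type*} [Group G] [Finite G]

lemma mem_zpowers_iff_exists_pos_pow_eq {u w : G} : u ∈ zpowers w ↔ ∃ m, 0 < m ∧ u = w ^ m := by
  refine ⟨fun h => ?_, fun ⟨m, _, hm⟩ => hm ▸ npow_mem_zpowers w m⟩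
  obtain ⟨m, rfl⟩ := mem_powers_iff_mem_zpowers.2 h
  exact ⟨m + orderOf w, by have := orderOf_pos w; omega,
    by rw [pow_add, pow_orderOf_eq_one, mul_one]⟩

lemma mem_closedNbhd_powerGraph_iff {u w : G} :
    u ∈ closedNbhd (powerGraph G) w ↔ u ∈ zpowers w ∨ w ∈ zpowers u := by
  simp only [closedNbhd, powerGraph, Set.mem_union, Set.mem_ofPred_eq, Set.mem_singleton_iff,
    ← mem_zpowers_iff_exists_pos_pow_eq]
  by_cases h : u = w
  · subst h
    simp [mem_zpowers]
  · tauto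

lemma mem_zpowers_of_orderOf_dvd {g u w : G} (hu : u ∈ zpowers g) (hw : w ∈ zpowers g)
    (h : orderOf u ∣ orderOf w) : u ∈ zpowers w := by
  obtain ⟨k, rfl⟩ := Submonoid.mem_powers_iff _ _ |>.1 (mem_powers_iff_mem_zpowers.2 hu)
  obtain ⟨l, rfl⟩ := Submonoid.mem_powers_iff _ _ |>.1 (mem_powers_iff_mem_zpowers.2 hw)
  have hn := orderOf_pos g
  have hd : g ^ (orderOf g).gcd l ∈ zpowers (g ^ l) := by
    refine mem_zpowers_iff.2 ⟨(orderOf g).gcdB l, ?_⟩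
    rw [← zpow_natCast g l, ← zpow_mul, ← zpow_natCast g, Nat.gcd_eq_gcd_ab, zpow_add,
      zpow_mul g (orderOf g : ℤ), zpow_natCast g (orderOf g), pow_orderOf_eq_one, one_zpow,
      one_mul]
  have hdk : (orderOf g).gcd l ∣ k := by
    have hpow : orderOf g ∣ k * (orderOf g / (orderOf g).gcd l) := by
      rwa [orderOf_dvd_iff_pow_eq_one, pow_mul, ← orderOf_dvd_iff_pow_eq_one, ← orderOf_pow]
    refine Nat.dvd_of_mul_dvd_mul_right (Nat.div_pos (Nat.gcd_le_left l hn)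
      (Nat.gcd_pos_of_pos_left l hn)) ?_
    rwa [Nat.mul_div_cancel' (Nat.gcd_dvd_left _ _)]
  obtain ⟨j, rfl⟩ := hdk
  rw [pow_mul]
  exact pow_mem hd j

lemma mem_zpowers_or_mem_zpowers_of_orderOf_eq_prime_pow {p n : ℕ} (hp : p.Prime) {g u w : G}
    (hg : orderOf g = p ^ n) (hu : u ∈ zpowers g) (hw : w ∈ zpowers g) :
    u ∈ zpowers w ∨ w ∈ zpowers u := by
  obtain ⟨i, -, hi⟩ := (Nat.dvd_prime_pow hp).1 (hg ▸ orderOf_dvd_of_mem_zpowers hu)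
  obtain ⟨j, -, hj⟩ := (Nat.dvd_prime_pow hp).1 (hg ▸ orderOf_dvd_of_mem_zpowers hw)
  rcases le_total i j with hij | hji
  · exact Or.inl (mem_zpowers_of_orderOf_dvd hu hw (hi ▸ hj ▸ pow_dvd_pow p hij))
  · exact Or.inr (mem_zpowers_of_orderOf_dvd hw hu (hi ▸ hj ▸ pow_dvd_pow p hji))

lemma zpowers_subset_closedNbhdSet_closedNbhd {p n : ℕ} (hp : p.Prime) {g : G}
    (hg : orderOf g = p ^ n) :
    (zpowers g : Set G) ⊆ closedNbhdSet (powerGraph G) (closedNbhd (powerGraph G) g) := by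
  intro u hu
  refine Set.mem_iInter₂.2 fun w hw => mem_closedNbhd_powerGraph_iff.2 ?_
  rcases mem_closedNbhd_powerGraph_iff.1 hw with hw | hgw
  · exact mem_zpowers_or_mem_zpowers_of_orderOf_eq_prime_pow hp hg hu hw
  · exact Or.inl (zpowers_le.2 hgw hu)

lemma mem_twinClass_of_mem_closedNbhdSet_closedNbhd {p n : ℕ} (hp : p.Prime) {y z : G}
    (hz : orderOf z = p ^ n)
    (hyz : y ∈ zpowers z) (hzy : z ∈ closedNbhdSet (powerGraph G) (closedNbhd (powerGraph G) y)) :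
    z ∈ twinClass (powerGraph G) y := by
  refine subset_antisymm (fun w hw => ?_) (closedNbhd_subset_of_mem_closedNbhdSet_closedNbhd _ hzy)
  exact (mem_closedNbhd_comm _).1
    (Set.mem_iInter₂.1 (zpowers_subset_closedNbhdSet_closedNbhd hp hz hyz) w hw)

/-- If `o(z)` had a prime divisor `q ≠ p`, an element `w ∈ ⟨z⟩` of order `pq` would contain `x`,
hence lie in `N[x] = N[y]`, but `w` is comparable with `y` neither way. -/
lemma exists_orderOf_eq_prime_pow_of_twin {p r : ℕ} (hp : p.Prime) {x y z : G} (hr : 2 ≤ r)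
    (hy : orderOf y = p ^ r) (hx : x ∈ zpowers y) (hxo : orderOf x = p)
    (hxy : x ∈ twinClass (powerGraph G) y) (hyz : y ∈ zpowers z) :
    ∃ a, orderOf z = p ^ a := by
  refine ⟨_, Nat.eq_prime_pow_of_unique_prime_dvd (orderOf_pos z).ne' fun {q} hq hqz => ?_⟩
  by_contra hqp
  have hpz : p ∣ orderOf z :=
    (dvd_pow_self p (by omega)).trans (hy ▸ orderOf_dvd_of_mem_zpowers hyz)
  have hpq : p * q ∣ orderOf z :=
    ((Nat.coprime_primes hp hq).2 (Ne.symm hqp)).mul_dvd_of_dvd_of_dvd hpz hqz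
  set w := z ^ (orderOf z / (p * q))
  have hwo : orderOf w = p * q := orderOf_pow_orderOf_div (orderOf_pos z).ne' hpq
  have hxw : x ∈ zpowers w := mem_zpowers_of_orderOf_dvd (zpowers_le.2 hyz hx)
    (npow_mem_zpowers z _) (hxo ▸ hwo ▸ dvd_mul_right p q)
  have hwy : w ∈ closedNbhd (powerGraph G) y :=
    hxy ▸ mem_closedNbhd_powerGraph_iff.2 (Or.inr hxw)
  rcases mem_closedNbhd_powerGraph_iff.1 hwy with hw | hw
  · have : q ∣ p ^ r := (dvd_mul_left q p).trans (hwo ▸ hy ▸ orderOf_dvd_of_mem_zpowers hw)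
    exact hqp ((Nat.prime_dvd_prime_iff_eq hq hp).1 (hq.dvd_of_dvd_pow this))
  · have : p * p ∣ p * q :=
      (pow_two p ▸ pow_dvd_pow p hr).trans (hy ▸ hwo ▸ orderOf_dvd_of_mem_zpowers hw)
    exact hqp ((Nat.prime_dvd_prime_iff_eq hp hq).1 (Nat.dvd_of_mul_dvd_mul_left hp.pos this)).symm

lemma closedNbhdSet_closedNbhd_subset_zpowers {p r : ℕ} (hp : p.Prime) {x y : G} (hr : 2 ≤ r)
    (hy : orderOf y = p ^ r) (hx : x ∈ zpowers y) (hxo : orderOf x = p)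
    (hxy : x ∈ twinClass (powerGraph G) y) (htwin : twinClass (powerGraph G) y ⊆ zpowers y) :
    closedNbhdSet (powerGraph G) (closedNbhd (powerGraph G) y) ⊆ zpowers y := by
  intro z hz
  have hzy : z ∈ closedNbhd (powerGraph G) y :=
    Set.mem_iInter₂.1 hz y (mem_closedNbhd_powerGraph_iff.2 (Or.inl (mem_zpowers y)))
  rcases mem_closedNbhd_powerGraph_iff.1 hzy with hzy | hyz
  · exact hzy
  · obtain ⟨a, ha⟩ := exists_orderOf_eq_prime_pow_of_twin hp hr hy hx hxo hxy hyz
    exact htwin (mem_twinClass_of_mem_closedNbhdSet_closedNbhd hp ha hyz hz)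

end PowerGraph

lemma setOf_prime_le_orderOf_union_one_eq_zpowers {G : Type*} [Group G] {p r : ℕ}
    (hp : p.Prime) {y : G} (hy : orderOf y = p ^ r) :
    {z | z ∈ zpowers y ∧ p ≤ orderOf z ∧ orderOf z ≤ p ^ r} ∪ {1} = zpowers y := by
  ext z
  by_cases hz1 : z = 1
  · simp [hz1, one_mem]
  simp only [Set.mem_union, Set.mem_ofPred_eq, Set.mem_singleton_iff, hz1, or_false,
    SetLike.mem_coe]
  refine ⟨And.left, fun hz => ?_⟩
  have hdvd : orderOf z ∣ p ^ r := hy ▸ orderOf_dvd_of_mem_zpowers hz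
  obtain ⟨i, -, hi⟩ := (Nat.dvd_prime_pow hp).1 hdvd
  have hi0 : i ≠ 0 := by
    rintro rfl
    exact hz1 (orderOf_eq_one_iff.1 (hi.trans (pow_zero p)))
  exact ⟨hz, hi ▸ Nat.le_self_pow hi0 p, Nat.le_of_dvd (pow_pos hp.pos r) hdvd⟩

theorem stmt14_general {G : Type*} [Group G] [Fintype G] (C : Set G) (y : G) (p r s : ℕ)
    (hp : p.Prime) (hr : 2 ≤ r)
    (hC : C = twinClass (powerGraph G) y)
    (hy : orderOf y = p ^ r)
    (hdesc : C = {z | z ∈ Subgroup.zpowers y ∧ p ^ (s + 1) ≤ orderOf z ∧ orderOf z ≤ p ^ r}) :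
    IsCritical (powerGraph G) C ↔ s = 0 := by
  have hhat : nbhdClosure (powerGraph G) C =
      closedNbhdSet (powerGraph G) (closedNbhd (powerGraph G) y) := by
    rw [nbhdClosure, hC, closedNbhdSet_twinClass]
  obtain ⟨x, hx, hxo⟩ : ∃ x ∈ zpowers y, orderOf x = p := ⟨_, npow_mem_zpowers y _,
    orderOf_pow_orderOf_div (orderOf_pos y).ne' (hy ▸ dvd_pow_self p (by omega))⟩
  have hx1 : x ≠ 1 := fun h => hp.one_lt.ne' (hxo ▸ h ▸ orderOf_one)
  have h1C : (1 : G) ∉ C := fun h => by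
    rw [hdesc, Set.mem_ofPred_eq, orderOf_one] at h
    exact (Nat.one_lt_pow s.succ_ne_zero hp.one_lt).not_ge h.2.1
  constructor
  · rintro ⟨hcrit, -, -⟩
    have hxC : x ∈ C := (hcrit ▸ hhat ▸ zpowers_subset_closedNbhdSet_closedNbhd hp hy hx :
      x ∈ C ∪ {1}).resolve_right hx1
    rw [hdesc, Set.mem_ofPred_eq, hxo] at hxC
    have hs : s + 1 ≤ 1 :=
      (Nat.pow_le_pow_iff_right hp.one_lt).1 (hxC.2.1.trans_eq (pow_one p).symm)
    omega
  · rintro rfl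
    have hCy : C ∪ {1} = zpowers y := by
      rw [hdesc, zero_add, pow_one, setOf_prime_le_orderOf_union_one_eq_zpowers hp hy]
    have hxC : x ∈ C := (hCy ▸ hx : x ∈ C ∪ {1}).resolve_right hx1
    have hĈ : nbhdClosure (powerGraph G) C = zpowers y := hhat ▸ subset_antisymm
      (closedNbhdSet_closedNbhd_subset_zpowers hp hr hy hx hxo (hC ▸ hxC)
        (hC ▸ fun z hz => (hdesc ▸ hz).1))
      (zpowers_subset_closedNbhdSet_closedNbhd hp hy)
    refine ⟨hĈ.trans hCy.symm, h1C, p, r, hp, hr, ?_⟩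
    rw [hĈ, ← Nat.card_coe_set_eq, SetLike.coe_sort_coe, Nat.card_zpowers, hy]

theorem stmt14 {G : Type*} [Group G] [Fintype G] (C : Set G) (y : G) (p r s : ℕ)
    (hp : p.Prime) (hr : 2 ≤ r) (hs : s ≤ r - 2)
    (hC : C = twinClass (powerGraph G) y)
    (hS : C ≠ twinClass (powerGraph G) 1)
    (hcomp : ∃ a ∈ C, ∃ b ∈ C, Subgroup.zpowers a ≠ Subgroup.zpowers b)
    (hy : orderOf y = p ^ r)
    (hdesc : C = {z | z ∈ Subgroup.zpowers y ∧ p ^ (s + 1) ≤ orderOf z ∧ orderOf z ≤ p ^ r}) :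
    IsCritical (powerGraph G) C ↔ s = 0 :=
  stmt14_general C y p r s hp hr hC hy hdesc
end

section
/- Let G be a finite group and X, Y distinct ⋄-classes joined in the power graph (some x ∈ X and y ∈ Y adjacent) with |X| > |Y|. Then every element of Y is a power of every element of X. -/
/-! If `a` and `b` are adjacent in the power graph, one of `⟨a⟩`, `⟨b⟩` contains the other.
Since `|[g]_⋄| = φ(o(g))` and `φ(d) ∣ φ(n)` whenever `d ∣ n`, the inclusion `⟨x⟩ ≤ ⟨y⟩` would
force `|X| ≤ |Y|`. Hence `⟨y⟩ ≤ ⟨x⟩ = ⟨a⟩` for every `a ∈ X`, and in a finite group every element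
of `⟨a⟩` is a positive power of `a`. -/

open Subgroup

theorem mem_diamondClass {G : Type*} [Group G] {x y : G} :
    x ∈ diamondClass y ↔ zpowers x = zpowers y :=
  Iff.rfl

theorem zpowers_eq_zpowers_iff_of_isOfFinOrder {G : Type*} [Group G] {g x : G}
    (hx : IsOfFinOrder x) :
    zpowers g = zpowers x ↔ g ∈ zpowers x ∧ orderOf g = orderOf x := by
  refine ⟨fun h ↦ ⟨h ▸ mem_zpowers g, by rw [← Nat.card_zpowers, h, Nat.card_zpowers]⟩, ?_⟩
  rintro ⟨hg, hord⟩
  have : Finite (zpowers x) := hx.finite_zpowers.to_subtype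
  exact eq_of_le_of_card_ge (zpowers_le.mpr hg) (by rw [Nat.card_zpowers, Nat.card_zpowers, hord])

theorem ncard_diamondClass {G : Type*} [Group G] {x : G} (hx : IsOfFinOrder x) :
    (diamondClass x).ncard = (orderOf x).totient := by
  classical
  have : Finite (zpowers x) := hx.finite_zpowers.to_subtype
  have := Fintype.ofFinite (zpowers x)
  let e : diamondClass x ≃ {a : zpowers x // orderOf a = orderOf x} :=
    { toFun g :=
        have h := (zpowers_eq_zpowers_iff_of_isOfFinOrder hx).mp g.2
        ⟨⟨g, h.1⟩, (orderOf_mk _ _).trans h.2⟩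
      invFun a := ⟨a.1, (zpowers_eq_zpowers_iff_of_isOfFinOrder hx).mpr
        ⟨a.1.2, (orderOf_coe a.1).trans a.2⟩⟩ }
  rw [← Nat.card_coe_set_eq, Nat.card_congr e, Nat.card_eq_fintype_card, Fintype.card_subtype,
    IsCyclic.card_orderOf_eq_totient (by rw [← Nat.card_eq_fintype_card, Nat.card_zpowers])]

theorem ncard_diamondClass_le_of_zpowers_le {G : Type*} [Group G] {x y : G}
    (hy : IsOfFinOrder y) (h : zpowers x ≤ zpowers y) :
    (diamondClass x).ncard ≤ (diamondClass y).ncard := by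
  have hx : x ∈ zpowers y := zpowers_le.mp h
  rw [ncard_diamondClass (hy.of_mem_zpowers hx), ncard_diamondClass hy]
  exact Nat.le_of_dvd (Nat.totient_pos.mpr hy.orderOf_pos)
    (Nat.totient_dvd_of_dvd (orderOf_dvd_of_mem_zpowers hx))

theorem IsOfFinOrder.exists_pos_pow_eq_of_mem_zpowers {G : Type*} [Group G] {a b : G}
    (ha : IsOfFinOrder a) (hb : b ∈ zpowers a) : ∃ m : ℕ, 0 < m ∧ b = a ^ m := by
  obtain ⟨n, rfl⟩ := ha.mem_powers_iff_mem_zpowers.mpr hb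
  refine ⟨n + orderOf a, by have := ha.orderOf_pos; omega, ?_⟩
  rw [pow_add, pow_orderOf_eq_one, mul_one]

theorem zpowers_le_or_le_of_powerGraph_adj {G : Type*} [Group G] {a b : G}
    (h : (powerGraph G).Adj a b) : zpowers b ≤ zpowers a ∨ zpowers a ≤ zpowers b := by
  rcases h.2 with ⟨m, -, rfl⟩ | ⟨m, -, rfl⟩
  · exact .inl (zpowers_le.mpr (npow_mem_zpowers a m))
  · exact .inr (zpowers_le.mpr (npow_mem_zpowers b m))

theorem stmt18_general {G : Type*} [Group G] [Fintype G] (x y : G)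
    (hcard : (diamondClass y).ncard < (diamondClass x).ncard)
    (hjoin : ∃ a ∈ diamondClass x, ∃ b ∈ diamondClass y, (powerGraph G).Adj a b) :
    ∀ a ∈ diamondClass x, ∀ b ∈ diamondClass y, ∃ m : ℕ, 0 < m ∧ b = a ^ m := by
  obtain ⟨a, ha, b, hb, hadj⟩ := hjoin
  rw [mem_diamondClass] at ha hb
  have hyx : zpowers y ≤ zpowers x := by
    rcases zpowers_le_or_le_of_powerGraph_adj hadj with h | h
    · rwa [ha, hb] at h
    · rw [ha, hb] at h
      exact absurd (ncard_diamondClass_le_of_zpowers_le (isOfFinOrder_of_finite y) h) hcard.not_ge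
  intro a' ha' b' hb'
  rw [mem_diamondClass] at ha' hb'
  refine (isOfFinOrder_of_finite a').exists_pos_pow_eq_of_mem_zpowers ?_
  exact ha' ▸ hyx (hb' ▸ mem_zpowers b')

theorem stmt18 {G : Type*} [Group G] [Fintype G] (x y : G)
    (hXY : diamondClass x ≠ diamondClass y)
    (hcard : (diamondClass y).ncard < (diamondClass x).ncard)
    (hjoin : ∃ a ∈ diamondClass x, ∃ b ∈ diamondClass y, (powerGraph G).Adj a b) :
    ∀ a ∈ diamondClass x, ∀ b ∈ diamondClass y, ∃ m : ℕ, 0 < m ∧ b = a ^ m :=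
  stmt18_general x y hcard hjoin
end
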